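/- arXiv:1906.11980 — 2 statements merged into one kernel-verified Lean document; each statement's English description precedes it below -/
import Mathlib

section
/- There exists a constant C₀ > 0 such that for every real r with 0 ≤ r ≤ p and every smooth compactly supported f: ℝ^m → ℝ, one has 𝔼(d^r f²) ≤ C₀·𝔼‖∇f‖² + C₀·𝔼(f²), and also 𝔼(H f²) ≤ C₀·𝔼‖∇f‖² + C₀·𝔼(f²). -/
open MeasureTheory Filter

noncomputable section

/-- Action of the vector field with coefficient functions `a` on `f`:
`X f (x) = ∑ j a_j(x) ∂f/∂x_j (x)`. -/
def Xop {m : ℕ} (a : (Fin m → ℝ) → Fin m → ℝ) (f : (Fin m → ℝ) → ℝ) (x : Fin m → ℝ) : ℝ :=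
  ∑ j : Fin m, a x j * fderiv ℝ f x (Pi.single j 1)

/-- `‖∇f‖² = ∑ₖ (Xᵏ f)²` for the Hörmander system with coefficients `a`. -/
def gradSq {m n : ℕ} (a : Fin n → (Fin m → ℝ) → Fin m → ℝ) (f : (Fin m → ℝ) → ℝ)
    (x : Fin m → ℝ) : ℝ :=
  ∑ k : Fin n, Xop (a k) f x ^ 2

/-- The sublaplacian `Δf = ∑ₖ Xᵏ(Xᵏ f)`. -/
def subLap {m n : ℕ} (a : Fin n → (Fin m → ℝ) → Fin m → ℝ) (f : (Fin m → ℝ) → ℝ)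
    (x : Fin m → ℝ) : ℝ :=
  ∑ k : Fin n, Xop (a k) (Xop (a k) f) x

/-- Expectation of `f` under the probability measure `e^{-H(x)} dx / Z`. -/
def gibbsInt {m : ℕ} (H : (Fin m → ℝ) → ℝ) (f : (Fin m → ℝ) → ℝ) : ℝ :=
  (∫ x, f x * Real.exp (-H x)) / ∫ x, Real.exp (-H x)

lemma two_mul_le_aux {A B ε : ℝ} (hε : 0 < ε) : 2*A*B ≤ ε*A^2 + B^2/ε := by
  rw [← sub_nonneg]
  have h : ε*A^2 + B^2/ε - 2*A*B = (ε*A - B)^2/ε := by field_simp; ring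
  rw [h]; positivity

variable {m : ℕ}

lemma Xop_mul (c : (Fin m → ℝ) → Fin m → ℝ) {u v : (Fin m → ℝ) → ℝ} {x : Fin m → ℝ}
    (hu : DifferentiableAt ℝ u x) (hv : DifferentiableAt ℝ v x) :
    Xop c (fun y => u y * v y) x = u x * Xop c v x + v x * Xop c u x := by
  unfold Xop
  rw [fderiv_fun_mul hu hv, Finset.mul_sum, Finset.mul_sum, ← Finset.sum_add_distrib]
  refine Finset.sum_congr rfl fun j _ => ?_
  simp [smul_eq_mul]
  ring

lemma Xop_exp_neg (c : (Fin m → ℝ) → Fin m → ℝ) {h : (Fin m → ℝ) → ℝ} {x : Fin m → ℝ}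
    (hh : DifferentiableAt ℝ h x) :
    Xop c (fun y => Real.exp (-h y)) x = -Xop c h x * Real.exp (-h x) := by
  have hF : HasFDerivAt (fun y => Real.exp (-h y))
      (Real.exp (-h x) • -(fderiv ℝ h x)) x :=
    by have := (Real.hasDerivAt_exp (-h x)).comp_hasFDerivAt x hh.hasFDerivAt.fun_neg; exact this
  unfold Xop
  rw [hF.fderiv]
  have hterm : ∀ j : Fin m, c x j * (Real.exp (-h x) • -fderiv ℝ h x) (Pi.single j 1)
      = -(c x j * (fderiv ℝ h x) (Pi.single j 1)) * Real.exp (-h x) := by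
    intro j; simp [smul_eq_mul]; ring
  simp only [hterm]
  rw [← Finset.sum_mul]
  congr 1
  rw [← Finset.sum_neg_distrib]

lemma Xop_add (c : (Fin m → ℝ) → Fin m → ℝ) {u v : (Fin m → ℝ) → ℝ} {x : Fin m → ℝ}
    (hu : DifferentiableAt ℝ u x) (hv : DifferentiableAt ℝ v x) :
    Xop c (fun y => u y + v y) x = Xop c u x + Xop c v x := by
  unfold Xop
  rw [fderiv_fun_add hu hv, ← Finset.sum_add_distrib]
  refine Finset.sum_congr rfl fun j _ => ?_
  simp; ring

lemma Xop_const_mul (c : (Fin m → ℝ) → Fin m → ℝ) {u : (Fin m → ℝ) → ℝ} {x : Fin m → ℝ}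
    (r : ℝ) (hu : DifferentiableAt ℝ u x) :
    Xop c (fun y => r * u y) x = r * Xop c u x := by
  unfold Xop
  rw [fderiv_const_mul hu, Finset.mul_sum]
  refine Finset.sum_congr rfl fun j _ => ?_
  simp; ring

lemma Xop_sum (c : (Fin m → ℝ) → Fin m → ℝ) {ι : Type*} (s : Finset ι)
    (F : ι → (Fin m → ℝ) → ℝ) {x : Fin m → ℝ}
    (hF : ∀ i ∈ s, DifferentiableAt ℝ (F i) x) :
    Xop c (fun y => ∑ i ∈ s, F i y) x = ∑ i ∈ s, Xop c (F i) x := by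
  classical
  induction s using Finset.induction with
  | empty => simp [Xop]
  | insert i s hni ih =>
    have h1 : DifferentiableAt ℝ (F i) x := hF i (Finset.mem_insert_self i s)
    have h2 : DifferentiableAt ℝ (fun y => ∑ j ∈ s, F j y) x :=
      DifferentiableAt.fun_sum fun j hj => hF j (Finset.mem_insert_of_mem hj)
    rw [Finset.sum_insert hni]
    have : (fun y => ∑ j ∈ insert i s, F j y) = fun y => F i y + ∑ j ∈ s, F j y := by
      funext y; rw [Finset.sum_insert hni]
    rw [this, Xop_add c h1 h2, ih fun j hj => hF j (Finset.mem_insert_of_mem hj)]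

lemma Xop_sq (c : (Fin m → ℝ) → Fin m → ℝ) {u : (Fin m → ℝ) → ℝ} {x : Fin m → ℝ}
    (hu : DifferentiableAt ℝ u x) :
    Xop c (fun y => u y ^ 2) x = 2 * u x * Xop c u x := by
  have : (fun y => u y ^ 2) = fun y => u y * u y := by funext y; ring
  rw [this, Xop_mul c hu hu]; ring

lemma Xop_eq_zero_of_nmem_tsupport (c : (Fin m → ℝ) → Fin m → ℝ) {g : (Fin m → ℝ) → ℝ}
    {x : Fin m → ℝ} (hx : x ∉ tsupport g) : Xop c g x = 0 := by
  have hev : g =ᶠ[nhds x] (fun _ => 0) := by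
    refine Filter.eventually_of_mem ((isClosed_tsupport g).isOpen_compl.mem_nhds hx) ?_
    exact fun y hy => image_eq_zero_of_notMem_tsupport hy
  have : fderiv ℝ g x = 0 := by
    rw [hev.fderiv_eq]; exact fderiv_const_apply 0
  simp [Xop, this]

lemma hasCompactSupport_Xop (c : (Fin m → ℝ) → Fin m → ℝ) {g : (Fin m → ℝ) → ℝ}
    (hg : HasCompactSupport g) : HasCompactSupport (Xop c g) :=
  HasCompactSupport.intro hg fun _ hx => Xop_eq_zero_of_nmem_tsupport c hx

lemma contDiff_Xop {c : (Fin m → ℝ) → Fin m → ℝ} (hc : ∀ j, ContDiff ℝ (⊤ : ℕ∞) fun x => c x j)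
    {g : (Fin m → ℝ) → ℝ} (hg : ContDiff ℝ 2 g) : ContDiff ℝ 1 (Xop c g) := by
  have hfd : ContDiff ℝ 1 fun x => fderiv ℝ g x := hg.fderiv_right (by norm_num)
  have : ContDiff ℝ 1 fun x => ∑ j : Fin m, c x j * fderiv ℝ g x (Pi.single j 1) := by
    refine ContDiff.sum fun j _ => ContDiff.mul ((hc j).of_le (by simp)) ?_
    exact hfd.clm_apply contDiff_const
  exact this

lemma continuous_Xop {c : (Fin m → ℝ) → Fin m → ℝ} (hc : ∀ j, Continuous fun x => c x j)
    {g : (Fin m → ℝ) → ℝ} (hg : ContDiff ℝ 1 g) : Continuous (Xop c g) := by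
  have hfd : Continuous fun x => fderiv ℝ g x := by
    have : ContDiff ℝ 0 fun x => fderiv ℝ g x := hg.fderiv_right (by norm_num)
    exact this.continuous
  have : Continuous fun x => ∑ j : Fin m, c x j * fderiv ℝ g x (Pi.single j 1) := by
    refine continuous_finset_sum _ fun j _ => Continuous.mul (hc j) ?_
    exact (ContinuousLinearMap.apply ℝ ℝ (Pi.single j 1)).continuous.comp hfd
  exact this



lemma fderiv_single_eq_zero_of_indep {c : (Fin m → ℝ) → Fin m → ℝ} (j : Fin m)
    (hc : ContDiff ℝ (⊤ : ℕ∞) fun x => c x j)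
    (hindep : ∀ x y : Fin m → ℝ, (∀ l, l ≠ j → x l = y l) → c x j = c y j)
    (x : Fin m → ℝ) : fderiv ℝ (fun y => c y j) x (Pi.single j 1) = 0 := by
  set v : Fin m → ℝ := Pi.single j 1 with hv
  have hγ : HasDerivAt (fun t : ℝ => x + t • v) v 0 := by
    simpa using ((hasDerivAt_id (0:ℝ)).smul_const v).const_add x
  have hderiv : HasDerivAt (fun t : ℝ => c (x + t • v) j)
      (fderiv ℝ (fun y => c y j) x (v)) 0 := by
    have hd : HasFDerivAt (fun y => c y j) (fderiv ℝ (fun y => c y j) x) (x + (0:ℝ) • v) := by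
      simpa using (hc.differentiable (by simp) x).hasFDerivAt
    exact hd.comp_hasDerivAt 0 hγ
  have hconst : (fun t : ℝ => c (x + t • v) j) = fun _ => c x j := by
    funext t
    refine hindep _ _ fun l hl => ?_
    simp [hv, Pi.single_eq_of_ne hl]
  rw [hconst] at hderiv
  exact hderiv.unique (hasDerivAt_const 0 _)

lemma integral_Xop_eq_zero (c : (Fin m → ℝ) → Fin m → ℝ)
    (hc : ∀ j, ContDiff ℝ (⊤ : ℕ∞) fun x => c x j)
    (hindep : ∀ (j : Fin m) (x y : Fin m → ℝ), (∀ l, l ≠ j → x l = y l) → c x j = c y j)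
    {g : (Fin m → ℝ) → ℝ} (hg : ContDiff ℝ 1 g) (hgs : HasCompactSupport g)
    (hXcont : Continuous (Xop c g))
    (hXzero : ∀ x ∉ tsupport g, Xop c g x = 0) :
    ∫ x, Xop c g x = 0 := by
  classical
  rcases m with _ | m'
  · have : (Xop c g) = fun _ => 0 := by
      funext x; simp [Xop]
    rw [this]; simp
  obtain ⟨R', hR'⟩ := (hgs.isBounded).subset_closedBall 0
  set R : ℝ := max R' 0 with hRdef
  have hR : tsupport g ⊆ Metric.closedBall 0 R :=
    hR'.trans (Metric.closedBall_subset_closedBall (le_max_left _ _))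
  have hR0 : (0:ℝ) ≤ R := le_max_right _ _
  set A : Fin (m' + 1) → ℝ := fun _ => -(R + 1) with hA
  set B : Fin (m' + 1) → ℝ := fun _ => (R + 1) with hB
  have hRR : R < R + 1 := by linarith
  -- points with some coordinate of absolute value ≥ R+1 are outside tsupport g
  have hout : ∀ z : Fin (m' + 1) → ℝ, (∃ i, R + 1 ≤ |z i|) → z ∉ tsupport g := by
    rintro z ⟨i, hi⟩ hz
    have h1 : |z i| ≤ ‖z‖ := by
      simpa [Real.norm_eq_abs] using norm_le_pi_norm z i
    have h2 : ‖z‖ ≤ R := by simpa [mem_closedBall_zero_iff] using hR hz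
    linarith
  have hAB : A ≤ B := by
    intro i; simp [hA, hB]; linarith
  set f : Fin (m' + 1) → (Fin (m' + 1) → ℝ) → ℝ := fun i x => c x i * g x with hf
  set f' : Fin (m' + 1) → (Fin (m' + 1) → ℝ) → (Fin (m' + 1) → ℝ) →L[ℝ] ℝ := fun i x =>
    c x i • fderiv ℝ g x + g x • fderiv ℝ (fun y => c y i) x with hf'
  have hdiv : ∀ x, (∑ i, f' i x (Pi.single i 1)) = Xop c g x := by
    intro x
    unfold Xop
    refine Finset.sum_congr rfl fun i _ => ?_
    have hz := fderiv_single_eq_zero_of_indep i (hc i) (hindep i) x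
    simp [hf', hz, smul_eq_mul]
  have key := MeasureTheory.integral_divergence_of_hasFDerivAt_off_countable'
    A B hAB f f' ∅ Set.countable_empty
    (fun i => (((hc i).continuous).mul hg.continuous).continuousOn)
    (fun x _ i => (((hc i).differentiable (by simp) x).hasFDerivAt).mul
      ((hg.differentiable one_ne_zero x).hasFDerivAt))
    (by
      rw [show (fun x => ∑ i, f' i x (Pi.single i 1)) = Xop c g from funext hdiv]
      exact (hXcont.integrable_of_hasCompactSupport
        (HasCompactSupport.intro hgs hXzero)).integrableOn)
  -- all face contributions vanish
  have hfaces : ∀ (i : Fin (m' + 1)) (t : ℝ), |t| = R + 1 →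
      ∀ y : Fin m' → ℝ, f i (Fin.insertNth i t y) = 0 := by
    intro i t ht y
    have : Fin.insertNth i t y ∉ tsupport g := by
      refine hout _ ⟨i, ?_⟩
      rw [Fin.insertNth_apply_same, ht]
    simp [hf, image_eq_zero_of_notMem_tsupport this]
  have hrhs : (∑ i : Fin (m' + 1),
      ((∫ x in Set.Icc (A ∘ i.succAbove) (B ∘ i.succAbove), f i (i.insertNth (B i) x)) -
        ∫ x in Set.Icc (A ∘ i.succAbove) (B ∘ i.succAbove), f i (i.insertNth (A i) x))) = 0 := by
    refine Finset.sum_eq_zero fun i _ => ?_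
    have h1 : ∀ y : Fin m' → ℝ, f i (i.insertNth (B i) y) = 0 := by
      intro y; exact hfaces i (B i) (by simp [hB]; linarith) y
    have h2 : ∀ y : Fin m' → ℝ, f i (i.insertNth (A i) y) = 0 := by
      intro y; exact hfaces i (A i) (by simp [hA]; rw [abs_of_nonpos (by linarith)]; ring) y
    simp [h1, h2]
  rw [hrhs] at key
  rw [show (fun x => ∑ i, f' i x (Pi.single i 1)) = Xop c g from funext hdiv] at key
  rw [← key]
  refine (MeasureTheory.setIntegral_eq_integral_of_forall_compl_eq_zero fun x hx => ?_).symm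
  -- outside the box, Xop c g vanishes
  refine hXzero x (hout x ?_)
  by_contra hcon
  push_neg at hcon
  apply hx
  rw [Set.mem_Icc]
  constructor <;> intro i
  · have h := (abs_lt.mp (hcon i)).1
    simp only [hA]; linarith
  · have h := (abs_lt.mp (hcon i)).2
    simp only [hB]; linarith

set_option maxHeartbeats 2000000 in
/-- Lemma 3.1 of the paper: single-site coercive inequality.
Under the structural assumptions on the Hörmander system, the metric-like function `d`,
the phase `φ` and the interactions `V_j`, there is `C₀ > 0` such that for every `0 ≤ r ≤ p`
and every smooth compactly supported `f`,
`𝔼(d^r f²) ≤ C₀ 𝔼‖∇f‖² + C₀ 𝔼 f²` and `𝔼(H f²) ≤ C₀ 𝔼‖∇f‖² + C₀ 𝔼 f²`. -/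
theorem single_site_coercive_inequality
    (m n : ℕ) (hm : 1 ≤ m) (hn : 1 ≤ n)
    (a : Fin n → (Fin m → ℝ) → Fin m → ℝ)
    (ha_smooth : ∀ k j, ContDiff ℝ (⊤ : ℕ∞) fun x => a k x j)
    (ha_indep : ∀ (k : Fin n) (j : Fin m) (x y : Fin m → ℝ),
      (∀ l, l ≠ j → x l = y l) → a k x j = a k y j)
    (d : (Fin m → ℝ) → ℝ) (hd_pos : ∀ x, 0 < d x) (hd_C2 : ContDiff ℝ 2 d)
    (ξ τ θ : ℝ) (hξ : 0 < ξ) (hτ : 0 < τ) (hθ : 0 < θ)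
    (hgrad_d : ∀ x, ξ ^ 2 ≤ gradSq a d x ∧ gradSq a d x ≤ τ ^ 2)
    (hlap_d : ∀ x, |subLap a d x| ≤ θ / d x)
    (p : ℝ) (hp : 2 ≤ p) (k₀ : ℝ) (hk₀ : 0 < k₀)
    (φ φ₁ : (Fin m → ℝ) → ℝ)
    (hφ_nonneg : ∀ x, 0 ≤ φ x) (hφ_C2 : ContDiff ℝ 2 φ)
    (hφ₁_nonneg : ∀ x, 0 ≤ φ₁ x) (hφ₁_C2 : ContDiff ℝ 2 φ₁)
    (hφ_grad : ∀ (k : Fin n) x, Xop (a k) φ x = φ₁ x * Xop (a k) d x)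
    (hφ_dom : ∀ x, k₀ * φ x ≤ d x * φ₁ x)
    (hφ_low : ∀ x, d x ^ p ≤ φ x)
    (N : ℕ) (V U : Fin N → (Fin m → ℝ) → ℝ)
    (hV_nonneg : ∀ j x, 0 ≤ V j x) (hV_C2 : ∀ j, ContDiff ℝ 2 (V j))
    (hU_nonneg : ∀ j x, 0 ≤ U j x) (hU_C2 : ∀ j, ContDiff ℝ 2 (U j))
    (hV_grad : ∀ (j : Fin N) (k : Fin n) x, Xop (a k) (V j) x = U j x * Xop (a k) d x)
    (hV_dom : ∀ j x, k₀ * V j x ≤ d x * U j x)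
    (J : Fin N → ℝ) (hJ : ∀ j, 0 < J j)
    (H : (Fin m → ℝ) → ℝ) (hH : ∀ x, H x = φ x + ∑ j : Fin N, J j * V j x)
    (hZ : Integrable fun x : Fin m → ℝ => Real.exp (-H x)) :
    ∃ C₀ : ℝ, 0 < C₀ ∧
      ∀ r : ℝ, 0 ≤ r → r ≤ p →
        ∀ f : (Fin m → ℝ) → ℝ, ContDiff ℝ (⊤ : ℕ∞) f → HasCompactSupport f →
          gibbsInt H (fun x => d x ^ r * f x ^ 2) ≤
              C₀ * gibbsInt H (fun x => gradSq a f x) + C₀ * gibbsInt H (fun x => f x ^ 2) ∧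
          gibbsInt H (fun x => H x * f x ^ 2) ≤
              C₀ * gibbsInt H (fun x => gradSq a f x) + C₀ * gibbsInt H (fun x => f x ^ 2) := by
  classical
  -- basic setup
  have hHC2 : ContDiff ℝ 2 H := by
    have h1 : ContDiff ℝ 2 fun x => φ x + ∑ j : Fin N, J j * V j x :=
      hφ_C2.add (ContDiff.sum fun j _ => contDiff_const.mul (hV_C2 j))
    have h2 : H = fun x => φ x + ∑ j : Fin N, J j * V j x := funext hH
    rw [h2]; exact h1
  have hsumV0 : ∀ x, 0 ≤ ∑ j : Fin N, J j * V j x := fun x =>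
    Finset.sum_nonneg fun j _ => mul_nonneg (hJ j).le (hV_nonneg j x)
  have hH0 : ∀ x, 0 ≤ H x := fun x => by rw [hH x]; linarith [hφ_nonneg x, hsumV0 x]
  have hφleH : ∀ x, φ x ≤ H x := fun x => by rw [hH x]; linarith [hsumV0 x]
  have hwcont : Continuous fun x : Fin m → ℝ => Real.exp (-H x) :=
    Real.continuous_exp.comp hHC2.continuous.neg
  have hwC1 : ContDiff ℝ 1 fun x : Fin m → ℝ => Real.exp (-H x) :=
    (Real.contDiff_exp.of_le le_top).comp (hHC2.neg.of_le one_le_two)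
  have hZpos : 0 < ∫ x : Fin m → ℝ, Real.exp (-H x) := by
    rw [integral_pos_iff_support_of_nonneg (fun x => (Real.exp_pos _).le) hZ]
    have hsupp : (Function.support fun x : Fin m → ℝ => Real.exp (-H x)) = Set.univ := by
      ext x; simp [Function.mem_support, (Real.exp_pos (-H x)).ne']
    rw [hsupp]
    exact isOpen_univ.measure_pos volume Set.univ_nonempty
  obtain ⟨ε, hεdef⟩ : ∃ ε : ℝ, ε = ξ ^ 2 * k₀ / 2 := ⟨_, rfl⟩
  have hε : 0 < ε := by rw [hεdef]; positivity
  obtain ⟨C₁, hC₁def⟩ : ∃ C : ℝ, C = θ + τ ^ 2 + ε := ⟨_, rfl⟩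
  have hC₁ : 0 < C₁ := by rw [hC₁def]; positivity
  obtain ⟨Cb, hCbdef⟩ : ∃ C : ℝ, C = C₁/ε + τ^2/(ε*ε) := ⟨_, rfl⟩
  have hCb0 : 0 ≤ Cb := by
    rw [hCbdef]
    exact add_nonneg (div_nonneg hC₁.le hε.le)
      (div_nonneg (sq_nonneg τ) (mul_nonneg hε.le hε.le))
  have hεCb : ε * Cb = C₁ + τ^2/ε := by rw [hCbdef]; field_simp
  obtain ⟨C₀, hC₀def⟩ : ∃ C : ℝ, C = Cb + 2 := ⟨_, rfl⟩
  refine ⟨C₀, by rw [hC₀def]; linarith, ?_⟩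
  intro r hr hrp f hfC hfK
  -- differentiability and continuity facts
  have hdD : Differentiable ℝ d := hd_C2.differentiable two_ne_zero
  have hfD : Differentiable ℝ f := hfC.differentiable (by simp)
  have hHD : Differentiable ℝ H := hHC2.differentiable two_ne_zero
  have hXd : ∀ k : Fin n, ContDiff ℝ 1 (Xop (a k) d) := fun k => contDiff_Xop (ha_smooth k) hd_C2
  have hXdD : ∀ k : Fin n, Differentiable ℝ (Xop (a k) d) := fun k => (hXd k).differentiable one_ne_zero
  have hwD : Differentiable ℝ fun y : Fin m → ℝ => Real.exp (-H y) := hwC1.differentiable one_ne_zero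
  -- Xop applied to H
  have hXH : ∀ (k : Fin n) (x : Fin m → ℝ),
      Xop (a k) H x = (φ₁ x + ∑ j : Fin N, J j * U j x) * Xop (a k) d x := by
    intro k x
    have hHfun : H = fun y => φ y + ∑ j : Fin N, J j * V j y := funext hH
    rw [hHfun]
    rw [Xop_add (a k) (hφ_C2.differentiable two_ne_zero x)
      (DifferentiableAt.fun_sum fun j _ =>
        (differentiableAt_const (J j)).fun_mul ((hV_C2 j).differentiable two_ne_zero x))]
    rw [Xop_sum (a k) Finset.univ (fun j y => J j * V j y)
      (fun j _ => (differentiableAt_const (J j)).mul ((hV_C2 j).differentiable two_ne_zero x))]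
    rw [hφ_grad k x]
    have hterm : ∀ j : Fin N, Xop (a k) (fun y => J j * V j y) x
        = J j * (U j x * Xop (a k) d x) := by
      intro j
      rw [Xop_const_mul (a k) (J j) ((hV_C2 j).differentiable two_ne_zero x), hV_grad j k x]
    rw [Finset.sum_congr rfl fun j _ => hterm j, add_mul, Finset.sum_mul]
    congr 1
    exact Finset.sum_congr rfl fun j _ => by ring
  -- regularity of the test vector fields g_k
  have hgkC1 : ∀ k : Fin n,
      ContDiff ℝ 1 fun y => Xop (a k) d y * d y * f y ^ 2 * Real.exp (-H y) :=
    fun k => (((hXd k).mul (hd_C2.of_le one_le_two)).mul ((hfC.of_le (by simp)).pow 2)).mul hwC1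
  have hgkCS : ∀ k : Fin n,
      HasCompactSupport fun y => Xop (a k) d y * d y * f y ^ 2 * Real.exp (-H y) :=
    fun k => HasCompactSupport.intro hfK fun x hx => by
      simp [image_eq_zero_of_notMem_tsupport hx]
  -- pointwise expansion of Xop (a k) g_k
  have hgk : ∀ (k : Fin n) (x : Fin m → ℝ),
      Xop (a k) (fun y => Xop (a k) d y * d y * f y ^ 2 * Real.exp (-H y)) x
        = (Xop (a k) (Xop (a k) d) x * d x + Xop (a k) d x ^ 2) * (f x ^ 2 * Real.exp (-H x))
          + Xop (a k) d x * Xop (a k) f x * (2 * d x * f x * Real.exp (-H x))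
          - Xop (a k) d x ^ 2 *
            (d x * (φ₁ x + ∑ j : Fin N, J j * U j x) * (f x ^ 2 * Real.exp (-H x))) := by
    intro k x
    have h1 : DifferentiableAt ℝ (fun y => Xop (a k) d y * d y * f y ^ 2) x :=
      ((hXdD k x).mul (hdD x)).mul ((hfD x).pow 2)
    rw [Xop_mul (a k) h1 (hwD x)]
    rw [Xop_exp_neg (a k) (hHD x)]
    rw [Xop_mul (a k) ((hXdD k x).fun_mul (hdD x)) ((hfD x).fun_pow 2)]
    rw [Xop_sq (a k) (hfD x)]
    rw [Xop_mul (a k) (hXdD k x) (hdD x)]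
    rw [hXH k x]
    ring
  -- summed identity
  have hsum : ∀ x : Fin m → ℝ,
      (∑ k : Fin n, Xop (a k) (fun y => Xop (a k) d y * d y * f y ^ 2 * Real.exp (-H y)) x)
        = (subLap a d x * d x + gradSq a d x) * (f x ^ 2 * Real.exp (-H x))
          + (∑ k : Fin n, Xop (a k) d x * Xop (a k) f x) * (2 * d x * f x * Real.exp (-H x))
          - gradSq a d x *
            (d x * (φ₁ x + ∑ j : Fin N, J j * U j x) * (f x ^ 2 * Real.exp (-H x))) := by
    intro x
    rw [Finset.sum_congr rfl fun k _ => hgk k x]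
    rw [Finset.sum_sub_distrib, Finset.sum_add_distrib, ← Finset.sum_mul, ← Finset.sum_mul,
      ← Finset.sum_mul, Finset.sum_add_distrib, ← Finset.sum_mul]
    simp only [subLap, gradSq]
  -- the integral of the divergence is zero
  have hIzero : (∫ x, ∑ k : Fin n,
      Xop (a k) (fun y => Xop (a k) d y * d y * f y ^ 2 * Real.exp (-H y)) x) = 0 := by
    rw [integral_finset_sum _ fun k _ =>
      ((continuous_Xop (fun j => (ha_smooth k j).continuous) (hgkC1 k)).integrable_of_hasCompactSupport
        (hasCompactSupport_Xop _ (hgkCS k)))]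
    exact Finset.sum_eq_zero fun k _ => integral_Xop_eq_zero (a k) (ha_smooth k) (ha_indep k)
      (hgkC1 k) (hgkCS k) (continuous_Xop (fun j => (ha_smooth k j).continuous) (hgkC1 k))
      (fun x hx => Xop_eq_zero_of_nmem_tsupport _ hx)
  -- continuity of the pieces
  have hXfc : ∀ k : Fin n, Continuous (Xop (a k) f) := fun k =>
    continuous_Xop (fun j => (ha_smooth k j).continuous) (hfC.of_le (by simp))
  have hXdc : ∀ k : Fin n, Continuous (Xop (a k) d) := fun k => (hXd k).continuous
  have hsubc : Continuous fun x => subLap a d x := by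
    have h : Continuous fun x => ∑ k : Fin n, Xop (a k) (Xop (a k) d) x :=
      continuous_finset_sum _ fun k _ =>
        continuous_Xop (fun j => (ha_smooth k j).continuous) (hXd k)
    exact h
  have hgdc : Continuous fun x => gradSq a d x := by
    have h : Continuous fun x => ∑ k : Fin n, Xop (a k) d x ^ 2 :=
      continuous_finset_sum _ fun k _ => (hXdc k).pow 2
    exact h
  have hgfc : Continuous fun x => gradSq a f x := by
    have h : Continuous fun x => ∑ k : Fin n, Xop (a k) f x ^ 2 :=
      continuous_finset_sum _ fun k _ => (hXfc k).pow 2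
    exact h
  have hGc : Continuous fun x => φ₁ x + ∑ j : Fin N, J j * U j x :=
    hφ₁_C2.continuous.add
      (continuous_finset_sum _ fun j _ => continuous_const.mul (hU_C2 j).continuous)
  have hPc : Continuous fun x => ∑ k : Fin n, Xop (a k) d x * Xop (a k) f x :=
    continuous_finset_sum _ fun k _ => (hXdc k).mul (hXfc k)
  have hdc : Continuous d := hd_C2.continuous
  have hfcc : Continuous f := hfC.continuous
  have hdrc : Continuous fun x => d x ^ r := hdc.rpow_const fun x => Or.inl (hd_pos x).ne'
  -- integrability helper
  have hcsInt : ∀ u : (Fin m → ℝ) → ℝ, Continuous u →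
      (∀ x, x ∉ tsupport f → u x = 0) → Integrable u :=
    fun u hu h0 => hu.integrable_of_hasCompactSupport (HasCompactSupport.intro hfK h0)
  have hf0 : ∀ x, x ∉ tsupport f → f x = 0 := fun x hx => image_eq_zero_of_notMem_tsupport hx
  have hgf0 : ∀ x, x ∉ tsupport f → gradSq a f x = 0 := fun x hx => by
    have h : ∀ k : Fin n, Xop (a k) f x = 0 := fun k => Xop_eq_zero_of_nmem_tsupport _ hx
    simp only [gradSq]
    exact Finset.sum_eq_zero fun k _ => by rw [h k]; ring
  -- integrable pieces
  have iA : Integrable fun x => gradSq a d x *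
      (d x * (φ₁ x + ∑ j : Fin N, J j * U j x) * (f x ^ 2 * Real.exp (-H x))) :=
    hcsInt _ (hgdc.mul ((hdc.mul hGc).mul ((hfcc.pow 2).mul hwcont)))
      fun x hx => by simp [hf0 x hx]
  have iB1 : Integrable fun x =>
      (subLap a d x * d x + gradSq a d x) * (f x ^ 2 * Real.exp (-H x)) :=
    hcsInt _ (((hsubc.mul hdc).add hgdc).mul ((hfcc.pow 2).mul hwcont))
      fun x hx => by simp [hf0 x hx]
  have iB2 : Integrable fun x => (∑ k : Fin n, Xop (a k) d x * Xop (a k) f x) *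
      (2 * d x * f x * Real.exp (-H x)) :=
    hcsInt _ (hPc.mul (((continuous_const.mul hdc).mul hfcc).mul hwcont))
      fun x hx => by simp [hf0 x hx]
  have iH2 : Integrable fun x => H x * f x ^ 2 * Real.exp (-H x) :=
    hcsInt _ ((hHC2.continuous.mul (hfcc.pow 2)).mul hwcont) fun x hx => by simp [hf0 x hx]
  have iF2 : Integrable fun x => f x ^ 2 * Real.exp (-H x) :=
    hcsInt _ ((hfcc.pow 2).mul hwcont) fun x hx => by simp [hf0 x hx]
  have iQ : Integrable fun x => gradSq a f x * Real.exp (-H x) :=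
    hcsInt _ (hgfc.mul hwcont) fun x hx => by simp [hgf0 x hx]
  have iR : Integrable fun x => d x ^ r * f x ^ 2 * Real.exp (-H x) :=
    hcsInt _ ((hdrc.mul (hfcc.pow 2)).mul hwcont) fun x hx => by simp [hf0 x hx]
  -- integration by parts identity
  have hAB : (∫ x, (subLap a d x * d x + gradSq a d x) * (f x ^ 2 * Real.exp (-H x)))
      + (∫ x, (∑ k : Fin n, Xop (a k) d x * Xop (a k) f x) *
          (2 * d x * f x * Real.exp (-H x)))
      = ∫ x, gradSq a d x *
          (d x * (φ₁ x + ∑ j : Fin N, J j * U j x) * (f x ^ 2 * Real.exp (-H x))) := by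
    have h0 : (∫ x, ((subLap a d x * d x + gradSq a d x) * (f x ^ 2 * Real.exp (-H x))
        + (∑ k : Fin n, Xop (a k) d x * Xop (a k) f x) * (2 * d x * f x * Real.exp (-H x))
        - gradSq a d x *
          (d x * (φ₁ x + ∑ j : Fin N, J j * U j x) * (f x ^ 2 * Real.exp (-H x))))) = 0 := by
      rw [← hIzero]
      exact integral_congr_ae (Filter.Eventually.of_forall fun x => (hsum x).symm)
    have iB12 : Integrable fun x =>
        (subLap a d x * d x + gradSq a d x) * (f x ^ 2 * Real.exp (-H x))
        + (∑ k : Fin n, Xop (a k) d x * Xop (a k) f x) * (2 * d x * f x * Real.exp (-H x)) :=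
      iB1.add iB2
    rw [integral_sub iB12 iA, integral_add iB1 iB2] at h0
    linarith
  -- pointwise coercivity bounds
  have hG0 : ∀ x, 0 ≤ φ₁ x + ∑ j : Fin N, J j * U j x := fun x =>
    add_nonneg (hφ₁_nonneg x) (Finset.sum_nonneg fun j _ => mul_nonneg (hJ j).le (hU_nonneg j x))
  have hkH : ∀ x, k₀ * H x ≤ d x * (φ₁ x + ∑ j : Fin N, J j * U j x) := by
    intro x
    have hs : (∑ j : Fin N, J j * (k₀ * V j x)) ≤ ∑ j : Fin N, J j * (d x * U j x) :=
      Finset.sum_le_sum fun j _ => mul_le_mul_of_nonneg_left (hV_dom j x) (hJ j).le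
    have e1 : k₀ * H x = k₀ * φ x + ∑ j : Fin N, J j * (k₀ * V j x) := by
      rw [hH x, mul_add, Finset.mul_sum]
      congr 1
      exact Finset.sum_congr rfl fun j _ => by ring
    have e2 : d x * (φ₁ x + ∑ j : Fin N, J j * U j x)
        = d x * φ₁ x + ∑ j : Fin N, J j * (d x * U j x) := by
      rw [mul_add, Finset.mul_sum]
      congr 1
      exact Finset.sum_congr rfl fun j _ => by ring
    rw [e1, e2]
    exact add_le_add (hφ_dom x) hs
  have hIneq1 : ξ^2*k₀*(∫ x, H x * f x ^ 2 * Real.exp (-H x))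
      ≤ ∫ x, gradSq a d x *
          (d x * (φ₁ x + ∑ j : Fin N, J j * U j x) * (f x ^ 2 * Real.exp (-H x))) := by
    rw [← integral_const_mul]
    refine integral_mono (iH2.const_mul _) iA fun x => ?_
    have h1 := hkH x
    have h2 := (hgrad_d x).1
    have h3 : 0 ≤ d x * (φ₁ x + ∑ j : Fin N, J j * U j x) :=
      mul_nonneg (hd_pos x).le (hG0 x)
    have h4 : 0 ≤ f x ^ 2 * Real.exp (-H x) := mul_nonneg (sq_nonneg _) (Real.exp_pos _).le
    have key : ξ^2 * (k₀ * H x)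
        ≤ gradSq a d x * (d x * (φ₁ x + ∑ j : Fin N, J j * U j x)) :=
      le_trans (mul_le_mul_of_nonneg_left h1 (sq_nonneg ξ))
        (mul_le_mul_of_nonneg_right h2 h3)
    nlinarith [mul_le_mul_of_nonneg_right key h4]
  have hsubd : ∀ x, subLap a d x * d x ≤ θ := by
    intro x
    have h := (abs_le.mp (hlap_d x)).2
    calc subLap a d x * d x ≤ θ / d x * d x :=
          mul_le_mul_of_nonneg_right h (hd_pos x).le
      _ = θ := div_mul_cancel₀ θ (hd_pos x).ne'
  have hIneq2 : (∫ x, (subLap a d x * d x + gradSq a d x) * (f x ^ 2 * Real.exp (-H x)))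
      ≤ (θ + τ^2) * ∫ x, f x ^ 2 * Real.exp (-H x) := by
    rw [← integral_const_mul]
    refine integral_mono iB1 (iF2.const_mul _) fun x => ?_
    have h4 : 0 ≤ f x ^ 2 * Real.exp (-H x) := mul_nonneg (sq_nonneg _) (Real.exp_pos _).le
    nlinarith [mul_le_mul_of_nonneg_right (add_le_add (hsubd x) (hgrad_d x).2) h4]
  have hd2H : ∀ x, d x ^ 2 ≤ 1 + H x := by
    intro x
    rcases le_or_gt (d x) 1 with h | h
    · nlinarith [hH0 x, hd_pos x]
    · have h2 : d x ^ (2:ℝ) ≤ d x ^ p := Real.rpow_le_rpow_of_exponent_le h.le hp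
      have h3 : (d x : ℝ) ^ (2:ℕ) = d x ^ (2:ℝ) := by
        rw [← Real.rpow_natCast (d x) 2]; norm_num
      calc d x ^ 2 = d x ^ (2:ℝ) := h3
        _ ≤ d x ^ p := h2
        _ ≤ φ x := hφ_low x
        _ ≤ H x := hφleH x
        _ ≤ 1 + H x := by linarith
  have hdrH : ∀ x, d x ^ r ≤ 1 + H x := by
    intro x
    rcases le_or_gt (d x) 1 with h | h
    · have : d x ^ r ≤ 1 := Real.rpow_le_one (hd_pos x).le h hr
      linarith [hH0 x]
    · calc d x ^ r ≤ d x ^ p := Real.rpow_le_rpow_of_exponent_le h.le hrp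
        _ ≤ φ x := hφ_low x
        _ ≤ H x := hφleH x
        _ ≤ 1 + H x := by linarith
  have hPQ : ∀ x, (∑ k : Fin n, Xop (a k) d x * Xop (a k) f x)^2 ≤ τ^2 * gradSq a f x := by
    intro x
    have h := Finset.sum_mul_sq_le_sq_mul_sq Finset.univ
      (fun k => Xop (a k) d x) (fun k => Xop (a k) f x)
    have hQ0 : (0:ℝ) ≤ gradSq a f x := Finset.sum_nonneg fun k _ => sq_nonneg _
    calc (∑ k : Fin n, Xop (a k) d x * Xop (a k) f x)^2
        ≤ gradSq a d x * gradSq a f x := h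
      _ ≤ τ^2 * gradSq a f x := mul_le_mul_of_nonneg_right (hgrad_d x).2 hQ0
  have hB2pt : ∀ x, (∑ k : Fin n, Xop (a k) d x * Xop (a k) f x) *
      (2 * d x * f x * Real.exp (-H x))
      ≤ ε * (H x * f x ^ 2 * Real.exp (-H x)) + (ε * (f x ^ 2 * Real.exp (-H x))
          + (τ^2/ε) * (gradSq a f x * Real.exp (-H x))) := by
    intro x
    have hW : (0:ℝ) < Real.exp (-H x) := Real.exp_pos _
    have key := two_mul_le_aux
      (A := d x * f x) (B := ∑ k : Fin n, Xop (a k) d x * Xop (a k) f x) hε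
    have h2 : (∑ k : Fin n, Xop (a k) d x * Xop (a k) f x)^2/ε ≤ (τ^2 * gradSq a f x)/ε :=
      (div_le_div_iff_of_pos_right hε).mpr (hPQ x)
    have h3 : ε * (d x * f x)^2 ≤ ε * ((1 + H x) * f x^2) := by
      nlinarith [mul_le_mul_of_nonneg_right (hd2H x) (sq_nonneg (f x)), hε.le,
        mul_le_mul_of_nonneg_left
          (mul_le_mul_of_nonneg_right (hd2H x) (sq_nonneg (f x))) hε.le]
    have h4 := key.trans (add_le_add h3 h2)
    have h5 := mul_le_mul_of_nonneg_left h4 hW.le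
    have e1 : (∑ k : Fin n, Xop (a k) d x * Xop (a k) f x) *
        (2 * d x * f x * Real.exp (-H x))
        = Real.exp (-H x) * (2 * (d x * f x) * ∑ k : Fin n, Xop (a k) d x * Xop (a k) f x) := by
      ring
    have e2 : Real.exp (-H x) * (ε * ((1 + H x) * f x ^ 2)
          + (τ^2 * gradSq a f x)/ε)
        = ε * (H x * f x ^ 2 * Real.exp (-H x)) + (ε * (f x ^ 2 * Real.exp (-H x))
          + (τ^2/ε) * (gradSq a f x * Real.exp (-H x))) := by
      field_simp
      ring
    rw [e1, ← e2]
    exact h5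
  have hIneq3 : (∫ x, (∑ k : Fin n, Xop (a k) d x * Xop (a k) f x) *
      (2 * d x * f x * Real.exp (-H x)))
      ≤ ε * (∫ x, H x * f x ^ 2 * Real.exp (-H x)) + (ε * (∫ x, f x ^ 2 * Real.exp (-H x))
          + (τ^2/ε) * ∫ x, gradSq a f x * Real.exp (-H x)) := by
    have i1 : Integrable fun x => ε * (f x ^ 2 * Real.exp (-H x))
        + τ ^ 2 / ε * (gradSq a f x * Real.exp (-H x)) :=
      (iF2.const_mul ε).add (iQ.const_mul (τ^2/ε))
    rw [← integral_const_mul, ← integral_const_mul, ← integral_const_mul,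
      ← integral_add (iF2.const_mul ε) (iQ.const_mul (τ^2/ε)),
      ← integral_add (iH2.const_mul ε) i1]
    exact integral_mono iB2 ((iH2.const_mul ε).add i1) hB2pt
  -- nonnegativity of the integrals
  have hIH0 : 0 ≤ ∫ x, H x * f x ^ 2 * Real.exp (-H x) :=
    integral_nonneg fun x =>
      mul_nonneg (mul_nonneg (hH0 x) (sq_nonneg _)) (Real.exp_pos _).le
  have hIF0 : 0 ≤ ∫ x, f x ^ 2 * Real.exp (-H x) :=
    integral_nonneg fun x => mul_nonneg (sq_nonneg _) (Real.exp_pos _).le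
  have hIQ0 : 0 ≤ ∫ x, gradSq a f x * Real.exp (-H x) :=
    integral_nonneg fun x => mul_nonneg
      (Finset.sum_nonneg fun k _ => sq_nonneg _) (Real.exp_pos _).le
  -- main unnormalized estimate
  have hmain : ε * (∫ x, H x * f x ^ 2 * Real.exp (-H x))
      ≤ C₁ * (∫ x, f x ^ 2 * Real.exp (-H x))
        + (τ^2/ε) * ∫ x, gradSq a f x * Real.exp (-H x) := by
    have h2ε : ξ^2 * k₀ = 2*ε := by rw [hεdef]; ring
    rw [hC₁def]
    nlinarith [hIneq1, hIneq2, hIneq3, hAB, h2ε]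
  have hIHbound : (∫ x, H x * f x ^ 2 * Real.exp (-H x))
      ≤ Cb * (∫ x, gradSq a f x * Real.exp (-H x)) + Cb * (∫ x, f x ^ 2 * Real.exp (-H x)) := by
    have hτε : (0:ℝ) ≤ τ^2/ε := div_nonneg (sq_nonneg τ) hε.le
    have e1 : ε * (Cb * (∫ x, gradSq a f x * Real.exp (-H x)))
        = C₁ * (∫ x, gradSq a f x * Real.exp (-H x))
          + (τ^2/ε) * (∫ x, gradSq a f x * Real.exp (-H x)) := by
      calc ε * (Cb * (∫ x, gradSq a f x * Real.exp (-H x)))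
          = (ε * Cb) * (∫ x, gradSq a f x * Real.exp (-H x)) := by ring
        _ = (C₁ + τ^2/ε) * (∫ x, gradSq a f x * Real.exp (-H x)) := by rw [hεCb]
        _ = _ := by ring
    have e2 : ε * (Cb * (∫ x, f x ^ 2 * Real.exp (-H x)))
        = C₁ * (∫ x, f x ^ 2 * Real.exp (-H x))
          + (τ^2/ε) * (∫ x, f x ^ 2 * Real.exp (-H x)) := by
      calc ε * (Cb * (∫ x, f x ^ 2 * Real.exp (-H x)))
          = (ε * Cb) * (∫ x, f x ^ 2 * Real.exp (-H x)) := by ring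
        _ = (C₁ + τ^2/ε) * (∫ x, f x ^ 2 * Real.exp (-H x)) := by rw [hεCb]
        _ = _ := by ring
    have hstep : ε * (∫ x, H x * f x ^ 2 * Real.exp (-H x))
        ≤ ε * (Cb * (∫ x, gradSq a f x * Real.exp (-H x))
            + Cb * (∫ x, f x ^ 2 * Real.exp (-H x))) := by
      have hC₁IQ : 0 ≤ C₁ * (∫ x, gradSq a f x * Real.exp (-H x)) :=
        mul_nonneg hC₁.le hIQ0
      have hτIF : 0 ≤ (τ^2/ε) * (∫ x, f x ^ 2 * Real.exp (-H x)) :=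
        mul_nonneg hτε hIF0
      have hdistr : ε * (Cb * (∫ x, gradSq a f x * Real.exp (-H x))
          + Cb * (∫ x, f x ^ 2 * Real.exp (-H x)))
          = ε * (Cb * (∫ x, gradSq a f x * Real.exp (-H x)))
            + ε * (Cb * (∫ x, f x ^ 2 * Real.exp (-H x))) := by ring
      rw [hdistr, e1, e2]
      linarith [hmain]
    exact le_of_mul_le_mul_left hstep hε
  have hIRle : (∫ x, d x ^ r * f x ^ 2 * Real.exp (-H x))
      ≤ (∫ x, f x ^ 2 * Real.exp (-H x)) + ∫ x, H x * f x ^ 2 * Real.exp (-H x) := by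
    rw [← integral_add iF2 iH2]
    refine integral_mono iR (iF2.add iH2) fun x => ?_
    have h4 : 0 ≤ f x ^ 2 * Real.exp (-H x) := mul_nonneg (sq_nonneg _) (Real.exp_pos _).le
    nlinarith [mul_le_mul_of_nonneg_right (hdrH x) h4]
  -- final bounds with C₀
  have hIHfinal : (∫ x, H x * f x ^ 2 * Real.exp (-H x))
      ≤ C₀ * (∫ x, gradSq a f x * Real.exp (-H x)) + C₀ * (∫ x, f x ^ 2 * Real.exp (-H x)) := by
    rw [hC₀def]
    nlinarith [hIHbound, hIQ0, hIF0]
  have hIRfinal : (∫ x, d x ^ r * f x ^ 2 * Real.exp (-H x))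
      ≤ C₀ * (∫ x, gradSq a f x * Real.exp (-H x)) + C₀ * (∫ x, f x ^ 2 * Real.exp (-H x)) := by
    rw [hC₀def]
    nlinarith [hIHbound, hIRle, hIQ0, hIF0]
  -- divide by the partition function
  have hdiv : ∀ I : ℝ,
      I ≤ C₀ * (∫ x, gradSq a f x * Real.exp (-H x)) + C₀ * (∫ x, f x ^ 2 * Real.exp (-H x)) →
      I / (∫ x : Fin m → ℝ, Real.exp (-H x))
        ≤ C₀ * ((∫ x, gradSq a f x * Real.exp (-H x)) / (∫ x : Fin m → ℝ, Real.exp (-H x)))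
          + C₀ * ((∫ x, f x ^ 2 * Real.exp (-H x)) / (∫ x : Fin m → ℝ, Real.exp (-H x))) := by
    intro I hI
    have hco : C₀ * ((∫ x, gradSq a f x * Real.exp (-H x)) / (∫ x : Fin m → ℝ, Real.exp (-H x)))
        + C₀ * ((∫ x, f x ^ 2 * Real.exp (-H x)) / (∫ x : Fin m → ℝ, Real.exp (-H x)))
        = (C₀ * (∫ x, gradSq a f x * Real.exp (-H x))
            + C₀ * (∫ x, f x ^ 2 * Real.exp (-H x))) / (∫ x : Fin m → ℝ, Real.exp (-H x)) := by
      field_simp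
    rw [hco]
    exact (div_le_div_iff_of_pos_right hZpos).mpr hI
  constructor
  · simpa only [gibbsInt] using hdiv _ hIRfinal
  · simpa only [gibbsInt] using hdiv _ hIHfinal
end
end

section
/- For every probability measure μ and all such f, g, one has (cov_μ(f², g))² ≤ 8 · μ(f²) · μ[(f − μ(f))² · (g² + μ(g²))]. -/
/-!
Since `μ(g - μ g) = 0`, the covariance is
`cov_μ(f², g) = μ[(f + μ f) · (f - μ f)(g - μ g)]`.
Cauchy–Schwarz bounds its square by `μ[(f + μ f)²] · μ[(f - μ f)² (g - μ g)²]`;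
the first factor is `μ(f²) + 3 (μ f)² ≤ 4 μ(f²)`, and pointwise
`(g - μ g)² ≤ 2 (g² + (μ g)²) ≤ 2 (g² + μ(g²))`.
-/

open MeasureTheory ProbabilityTheory

section

variable {α : Type*} [MeasurableSpace α] {μ : Measure α}

theorem integral_mul_sq_le_of_memLp {u v : α → ℝ} (hu : MemLp u 2 μ) (hv : MemLp v 2 μ) :
    (∫ x, u x * v x ∂μ) ^ 2 ≤ (∫ x, u x ^ 2 ∂μ) * ∫ x, v x ^ 2 ∂μ := by
  have hinner : ∀ {w z : α → ℝ} (hw : MemLp w 2 μ) (hz : MemLp z 2 μ),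
      inner ℝ (hw.toLp w) (hz.toLp z) = ∫ x, w x * z x ∂μ := fun hw hz => by
    rw [L2.inner_def]
    refine integral_congr_ae ?_
    filter_upwards [hw.coeFn_toLp, hz.coeFn_toLp] with x hwx hzx
    simp [hwx, hzx, mul_comm]
  have h := real_inner_mul_inner_self_le (hu.toLp u) (hv.toLp v)
  simpa only [hinner, ← sq] using h

theorem sq_integral_le_integral_sq [IsProbabilityMeasure μ] {f : α → ℝ} (hf : MemLp f 2 μ) :
    (∫ x, f x ∂μ) ^ 2 ≤ ∫ x, f x ^ 2 ∂μ := by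
  have h := variance_nonneg f μ
  rw [variance_eq_sub hf] at h
  simpa using h

theorem integral_mul_sub_mul_integral_eq_integral_sub_mul_sub [IsProbabilityMeasure μ]
    {h g : α → ℝ} (hh : Integrable h μ) (hg : Integrable g μ)
    (hhg : Integrable (fun x => h x * g x) μ) (a : ℝ) :
    (∫ x, h x * g x ∂μ) - (∫ x, h x ∂μ) * ∫ x, g x ∂μ =
      ∫ x, (h x - a) * (g x - ∫ y, g y ∂μ) ∂μ := by
  set c := ∫ y, g y ∂μ
  have hexpand : (fun x => (h x - a) * (g x - c)) =
      fun x => (h x * g x - c * h x) - (a * g x - a * c) := by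
    funext x; ring
  rw [hexpand,
    integral_sub (hhg.sub' (hh.const_mul c)) ((hg.const_mul a).sub' (integrable_const _)),
    integral_sub hhg (hh.const_mul c), integral_sub (hg.const_mul a) (integrable_const _),
    integral_const_mul, integral_const_mul, integral_const]
  simp only [probReal_univ, one_smul]
  ring

theorem integral_add_integral_sq_le [IsProbabilityMeasure μ] {f : α → ℝ} (hf : MemLp f 2 μ) :
    ∫ x, (f x + ∫ y, f y ∂μ) ^ 2 ∂μ ≤ 4 * ∫ x, f x ^ 2 ∂μ := by
  set m := ∫ y, f y ∂μ
  have hexpand : (fun x => (f x + m) ^ 2) = fun x => f x ^ 2 + (2 * m * f x + m ^ 2) := by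
    funext x; ring
  have hf1 : Integrable f μ := hf.integrable one_le_two
  rw [hexpand, integral_add hf.integrable_sq ((hf1.const_mul _).fun_add (integrable_const _)),
    integral_add (hf1.const_mul _) (integrable_const _), integral_const_mul, integral_const]
  simp only [probReal_univ, one_smul]
  nlinarith [sq_integral_le_integral_sq hf]

theorem sq_mul_sub_le_two_mul_sq_mul_add {a b c s : ℝ} (hcs : c ^ 2 ≤ s) :
    (a * (b - c)) ^ 2 ≤ 2 * (a ^ 2 * (b ^ 2 + s)) := by
  nlinarith [mul_nonneg (sq_nonneg a) (sq_nonneg (b + c)),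
    mul_nonneg (sq_nonneg a) (sub_nonneg.2 hcs)]

end

/-- covariance inequality of [Pa1], used in Lemma 6.1 of the paper:
for a probability measure `μ`,
`(cov_μ(f², g))² ≤ 8 μ(f²) μ[(f - μ f)² (g² + μ g²)]`. -/
theorem covariance_square_bound {α : Type*} [MeasurableSpace α]
    (μ : Measure α) [IsProbabilityMeasure μ] (f g : α → ℝ)
    (hf : Integrable f μ) (hf2 : Integrable (fun x => f x ^ 2) μ)
    (hg : Integrable g μ) (hg2 : Integrable (fun x => g x ^ 2) μ)
    (hf2g : Integrable (fun x => f x ^ 2 * g x) μ)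
    (hmix : Integrable
      (fun x => (f x - ∫ y, f y ∂μ) ^ 2 * (g x ^ 2 + ∫ y, g y ^ 2 ∂μ)) μ) :
    ((∫ x, f x ^ 2 * g x ∂μ) - (∫ x, f x ^ 2 ∂μ) * ∫ x, g x ∂μ) ^ 2 ≤
      8 * (∫ x, f x ^ 2 ∂μ) *
        ∫ x, (f x - ∫ y, f y ∂μ) ^ 2 * (g x ^ 2 + ∫ y, g y ^ 2 ∂μ) ∂μ := by
  set m := ∫ y, f y ∂μ
  set c := ∫ y, g y ∂μ
  have hfL : MemLp f 2 μ := (memLp_two_iff_integrable_sq hf.1).2 hf2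
  have hgL : MemLp g 2 μ := (memLp_two_iff_integrable_sq hg.1).2 hg2
  have hpoint : ∀ x, ((f x - m) * (g x - c)) ^ 2 ≤
      2 * ((f x - m) ^ 2 * (g x ^ 2 + ∫ y, g y ^ 2 ∂μ)) := fun x =>
    sq_mul_sub_le_two_mul_sq_mul_add (sq_integral_le_integral_sq hgL)
  have hmeas : AEStronglyMeasurable (fun x => (f x - m) * (g x - c)) μ := by fun_prop
  have hvL : MemLp (fun x => (f x - m) * (g x - c)) 2 μ :=
    (memLp_two_iff_integrable_sq hmeas).2 <| (hmix.const_mul 2).mono' (hmeas.pow 2) <|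
      .of_forall fun x => by simpa only [Real.norm_eq_abs, abs_sq] using hpoint x
  have hcov : (∫ x, f x ^ 2 * g x ∂μ) - (∫ x, f x ^ 2 ∂μ) * c =
      ∫ x, (f x + m) * ((f x - m) * (g x - c)) ∂μ := by
    rw [integral_mul_sub_mul_integral_eq_integral_sub_mul_sub hf2 hg hf2g (m ^ 2)]
    congr 1 with x
    ring
  calc _ = (∫ x, (f x + m) * ((f x - m) * (g x - c)) ∂μ) ^ 2 := by rw [hcov]
    _ ≤ (∫ x, (f x + m) ^ 2 ∂μ) * ∫ x, ((f x - m) * (g x - c)) ^ 2 ∂μ :=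
      integral_mul_sq_le_of_memLp (hfL.add (memLp_const m)) hvL
    _ ≤ (4 * ∫ x, f x ^ 2 ∂μ) *
        (2 * ∫ x, (f x - m) ^ 2 * (g x ^ 2 + ∫ y, g y ^ 2 ∂μ) ∂μ) := by
      refine mul_le_mul (integral_add_integral_sq_le hfL) ?_
        (integral_nonneg fun x => sq_nonneg _) (by positivity)
      rw [← integral_const_mul]
      exact integral_mono hvL.integrable_sq (hmix.const_mul 2) hpoint
    _ = _ := by ring
end
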